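/- (Mean-field bound for the mixture state of the DHM.) For every β > 0, J > 0, σ ∈ (1/2,1), h ∈ ℝ and all real m_1, m_2, the thermodynamic-limit free energy f(h,β,J,σ) = lim_{k→∞} f_k(h,β,J,σ) satisfies f(h,β,J,σ) ≥ log 2 + (1/2) log cosh(βh + βJ C_{2σ−1} m_1) + (1/2) log cosh(βh + βJ C_{2σ−1} m_2) − (βJ C_{2σ})/2 − (βJ C_{2σ−1}/2)·(m_1² + m_2²)/2. -/

import Mathlib

open Real Filter

/-- The ±1 value of a Boolean spin. -/
noncomputable def spin (b : Bool) : ℝ := if b then 1 else -1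

/-- Embedding of the first half of the sites. -/
def finLeft {k : ℕ} (i : Fin (2 ^ k)) : Fin (2 ^ (k + 1)) :=
  ⟨i.1, lt_of_lt_of_le i.2 (Nat.pow_le_pow_right (by norm_num) (Nat.le_succ k))⟩

/-- Embedding of the second half of the sites. -/
def finRight {k : ℕ} (i : Fin (2 ^ k)) : Fin (2 ^ (k + 1)) :=
  ⟨i.1 + 2 ^ k, by
    have h2 : 2 ^ (k + 1) = 2 ^ k + 2 ^ k := by rw [pow_succ]; ring
    have := i.2; omega⟩

/-- The Dyson hierarchical model Hamiltonian, defined recursively. -/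
noncomputable def dysonH (J σ : ℝ) : (k : ℕ) → (Fin (2 ^ k) → Bool) → ℝ
  | 0, _ => 0
  | (k + 1), S =>
      dysonH J σ k (fun i => S (finLeft i)) + dysonH J σ k (fun i => S (finRight i)) -
        J / (2 : ℝ) ^ (2 * σ * ((k : ℝ) + 1)) *
          ∑ i : Fin (2 ^ (k + 1)), ∑ j : Fin (2 ^ (k + 1)),
            if i < j then spin (S i) * spin (S j) else 0

/-- The finite-volume free energy of the Dyson hierarchical model. -/
noncomputable def dysonF (h β J σ : ℝ) (k : ℕ) : ℝ :=
  ((2 : ℝ) ^ k)⁻¹ * Real.log (∑ S : Fin (2 ^ k) → Bool,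
    Real.exp (-β * dysonH J σ k S + β * h * ∑ i, spin (S i)))

/-- The constant `C_y = 2^{-y} / (1 - 2^{-y})`. -/
noncomputable def Cconst (y : ℝ) : ℝ := (2 : ℝ) ^ (-y) / (1 - (2 : ℝ) ^ (-y))

/-!
Because spins are `±1`, the pair sum of a block of `N` sites with magnetisation `M` equals
`(M² - N) / 2`, hence is at least `m N M - m² N² / 2 - N / 2` for every real `m`. Using this at
every level of the hierarchy with one fixed `m` bounds `H_k` above by a function linear in the
spins; for the mixture one takes `m₁` in the left half, `m₂` in the right half and `m = 0` for the
top block. A linear Hamiltonian factorises into a product of `2 cosh`, so `f_{k+1}` is bounded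
below by the mean-field expression with the partial sums of the geometric series `C_{2σ-1}`,
`C_{2σ}` in place of these constants, and the bound passes to the limit.
-/

open Finset

noncomputable def magnetization {N : ℕ} (S : Fin N → Bool) : ℝ := ∑ i, spin (S i)

noncomputable def spinPairSum {N : ℕ} (S : Fin N → Bool) : ℝ :=
  ∑ i, ∑ j, if i < j then spin (S i) * spin (S j) else 0

noncomputable def geomSum (y : ℝ) (k : ℕ) : ℝ :=
  ∑ l ∈ range k, (2 : ℝ) ^ (-y * ((l : ℝ) + 1))

lemma spin_mul_self (b : Bool) : spin b * spin b = 1 := by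
  cases b <;> norm_num [spin]

lemma sum_sum_ite_lt_mul_eq {N : ℕ} (x : Fin N → ℝ) (hx : ∀ i, x i * x i = 1) :
    ∑ i, ∑ j, (if i < j then x i * x j else 0) = ((∑ i, x i) ^ 2 - N) / 2 := by
  have hsplit : ∀ i j, x i * x j =
      (if i < j then x i * x j else 0) + (if j < i then x j * x i else 0) +
        (if i = j then 1 else 0) := by
    intro i j
    rcases lt_trichotomy i j with hij | rfl | hji
    · simp [hij, hij.not_gt, hij.ne]
    · simp [hx]
    · simp [hji, hji.not_gt, hji.ne', mul_comm]
  have hsq : (∑ i, x i) ^ 2 = 2 * ∑ i, ∑ j, (if i < j then x i * x j else 0) + N := by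
    rw [sq, sum_mul_sum]
    simp only [sum_congr rfl fun i _ => sum_congr rfl fun j _ => hsplit i j, sum_add_distrib]
    rw [sum_comm (f := fun i j => if j < i then x j * x i else 0)]
    simp
    ring
  linarith

lemma spinPairSum_ge {N : ℕ} (S : Fin N → Bool) (m : ℝ) :
    m * N * magnetization S - m ^ 2 * N ^ 2 / 2 - N / 2 ≤ spinPairSum S := by
  rw [spinPairSum, sum_sum_ite_lt_mul_eq _ fun i => spin_mul_self _, ← magnetization]
  nlinarith [sq_nonneg (magnetization S - m * N)]

lemma sum_fin_two_pow_succ {k : ℕ} (f : Fin (2 ^ (k + 1)) → ℝ) :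
    ∑ i, f i = ∑ i : Fin (2 ^ k), f (finLeft i) + ∑ i : Fin (2 ^ k), f (finRight i) := by
  have h : 2 ^ (k + 1) = 2 ^ k + 2 ^ k := by rw [pow_succ]; ring
  rw [← Fin.sum_congr' f h.symm, Fin.sum_univ_add]
  congr 1
  exact sum_congr rfl fun i _ => congrArg f (Fin.ext (Nat.add_comm _ _))

lemma magnetization_succ {k : ℕ} (S : Fin (2 ^ (k + 1)) → Bool) :
    magnetization S =
      magnetization (fun i => S (finLeft i)) + magnetization (fun i => S (finRight i)) :=
  sum_fin_two_pow_succ _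

lemma dysonH_succ (J σ : ℝ) (k : ℕ) (S : Fin (2 ^ (k + 1)) → Bool) :
    dysonH J σ (k + 1) S =
      dysonH J σ k (fun i => S (finLeft i)) + dysonH J σ k (fun i => S (finRight i)) -
        J * 2 ^ (-(2 * σ) * ((k : ℝ) + 1)) * spinPairSum S := by
  rw [dysonH, neg_mul, Real.rpow_neg zero_le_two, div_eq_mul_inv, spinPairSum]

lemma geomSum_succ (y : ℝ) (k : ℕ) :
    geomSum y (k + 1) = geomSum y k + 2 ^ (-y * ((k : ℝ) + 1)) :=
  sum_range_succ _ _

lemma two_rpow_neg_sub_one_mul (y : ℝ) (k : ℕ) :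
    (2 : ℝ) ^ (-(y - 1) * ((k : ℝ) + 1)) = 2 ^ (k + 1) * 2 ^ (-y * ((k : ℝ) + 1)) := by
  rw [← Real.rpow_natCast, ← Real.rpow_add zero_lt_two]
  congr 1; push_cast; ring

lemma tendsto_geomSum {y : ℝ} (hy : 0 < y) : Tendsto (geomSum y) atTop (nhds (Cconst y)) := by
  set r : ℝ := 2 ^ (-y)
  have hr0 : 0 ≤ r := Real.rpow_nonneg zero_le_two _
  have hr1 : r < 1 := Real.rpow_lt_one_of_one_lt_of_neg one_lt_two (neg_lt_zero.2 hy)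
  have hterm : ∀ l : ℕ, (2 : ℝ) ^ (-y * ((l : ℝ) + 1)) = r * r ^ l := by
    intro l
    rw [← Real.rpow_natCast, ← Real.rpow_mul zero_le_two, ← Real.rpow_add zero_lt_two]
    congr 1; ring
  have hgeom : geomSum y = fun k => r * ∑ l ∈ range k, r ^ l := by
    funext k; simp only [geomSum, hterm, mul_sum]
  rw [hgeom, Cconst, div_eq_mul_inv]
  exact (hasSum_geometric_of_lt_one hr0 hr1).tendsto_sum_nat.const_mul r

section Hamiltonian

variable {J : ℝ} (σ : ℝ)

theorem dysonH_le (hJ : 0 ≤ J) (m : ℝ) :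
    ∀ (k : ℕ) (S : Fin (2 ^ k) → Bool), dysonH J σ k S ≤
      J * (2 ^ k * (geomSum (2 * σ - 1) k * m ^ 2 + geomSum (2 * σ) k) / 2 -
        m * geomSum (2 * σ - 1) k * magnetization S)
  | 0, S => by simp [dysonH, geomSum]
  | k + 1, S => by
    have hL := dysonH_le hJ m k (fun i => S (finLeft i))
    have hR := dysonH_le hJ m k (fun i => S (finRight i))
    set q : ℝ := 2 ^ (-(2 * σ) * ((k : ℝ) + 1))
    have hq : 0 ≤ q := Real.rpow_nonneg zero_le_two _
    have hpair := mul_le_mul_of_nonneg_left (spinPairSum_ge S m) (mul_nonneg hJ hq)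
    push_cast [magnetization_succ] at hpair
    rw [dysonH_succ, geomSum_succ, geomSum_succ, two_rpow_neg_sub_one_mul, magnetization_succ]
    linear_combination hL + hR + hpair

theorem dysonH_succ_le_mixture (hJ : 0 ≤ J) (m₁ m₂ : ℝ) (k : ℕ) (S : Fin (2 ^ (k + 1)) → Bool) :
    dysonH J σ (k + 1) S ≤
      J * (2 ^ k * (geomSum (2 * σ - 1) k * ((m₁ ^ 2 + m₂ ^ 2) / 2) + geomSum (2 * σ) (k + 1)) -
        geomSum (2 * σ - 1) k * (m₁ * magnetization (fun i => S (finLeft i)) +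
          m₂ * magnetization (fun i => S (finRight i)))) := by
  have hL := dysonH_le σ hJ m₁ k (fun i => S (finLeft i))
  have hR := dysonH_le σ hJ m₂ k (fun i => S (finRight i))
  set q : ℝ := 2 ^ (-(2 * σ) * ((k : ℝ) + 1))
  have hq : 0 ≤ q := Real.rpow_nonneg zero_le_two _
  have hpair := mul_le_mul_of_nonneg_left (spinPairSum_ge S 0) (mul_nonneg hJ hq)
  push_cast at hpair
  rw [dysonH_succ, geomSum_succ]
  linear_combination hL + hR + hpair

end Hamiltonian

lemma sum_exp_sum_mul_spin {N : ℕ} (a : Fin N → ℝ) :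
    ∑ S : Fin N → Bool, exp (∑ i, a i * spin (S i)) = ∏ i, 2 * cosh (a i) := by
  simp only [Real.exp_sum]
  rw [← Fintype.prod_sum fun i b => exp (a i * spin b)]
  refine prod_congr rfl fun i _ => ?_
  simp [spin, Real.cosh_eq]
  ring

lemma sum_log_two_mul_cosh_sub_le_log_sum_exp {N : ℕ} (E : (Fin N → Bool) → ℝ) (a : Fin N → ℝ)
    (C : ℝ) (hE : ∀ S, ∑ i, a i * spin (S i) - C ≤ E S) :
    ∑ i, log (2 * cosh (a i)) - C ≤ log (∑ S, exp (E S)) :=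
  calc ∑ i, log (2 * cosh (a i)) - C
      = log (∑ S : Fin N → Bool, exp (∑ i, a i * spin (S i) - C)) := by
        simp only [Real.exp_sub, ← sum_div, sum_exp_sum_mul_spin]
        rw [Real.log_div (prod_pos fun i _ => by positivity).ne' (exp_ne_zero _),
          Real.log_prod fun i _ => by positivity, log_exp]
    _ ≤ log (∑ S, exp (E S)) :=
        Real.log_le_log (by positivity) (sum_le_sum fun S _ => exp_le_exp.2 (hE S))

def twoBlock {k : ℕ} (c₁ c₂ : ℝ) (i : Fin (2 ^ (k + 1))) : ℝ :=
  if (i : ℕ) < 2 ^ k then c₁ else c₂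

@[simp] lemma twoBlock_finLeft {k : ℕ} (c₁ c₂ : ℝ) (i : Fin (2 ^ k)) :
    twoBlock c₁ c₂ (finLeft i) = c₁ :=
  if_pos i.2

@[simp] lemma twoBlock_finRight {k : ℕ} (c₁ c₂ : ℝ) (i : Fin (2 ^ k)) :
    twoBlock c₁ c₂ (finRight i) = c₂ :=
  if_neg (by simp [finRight])

theorem dysonF_succ_ge {β J : ℝ} (h σ : ℝ) (hβ : 0 ≤ β) (hJ : 0 ≤ J) (m₁ m₂ : ℝ) (k : ℕ) :
    log 2 + 1 / 2 * log (cosh (β * h + β * J * geomSum (2 * σ - 1) k * m₁)) +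
        1 / 2 * log (cosh (β * h + β * J * geomSum (2 * σ - 1) k * m₂)) -
        β * J * geomSum (2 * σ) (k + 1) / 2 -
        β * J * geomSum (2 * σ - 1) k / 2 * ((m₁ ^ 2 + m₂ ^ 2) / 2) ≤
      dysonF h β J σ (k + 1) := by
  set A := geomSum (2 * σ - 1) k
  set c₁ := β * h + β * J * A * m₁
  set c₂ := β * h + β * J * A * m₂
  set C := β * J * 2 ^ k * (A * ((m₁ ^ 2 + m₂ ^ 2) / 2) + geomSum (2 * σ) (k + 1))
  have hZ := sum_log_two_mul_cosh_sub_le_log_sum_exp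
    (fun S => -β * dysonH J σ (k + 1) S + β * h * ∑ i, spin (S i)) (twoBlock c₁ c₂) C
    fun S => by
      have hH := mul_le_mul_of_nonneg_left (dysonH_succ_le_mixture σ hJ m₁ m₂ k S) hβ
      have hM := magnetization_succ S
      simp only [magnetization] at hH hM
      simp only [sum_fin_two_pow_succ fun i => twoBlock c₁ c₂ i * spin (S i),
        twoBlock_finLeft, twoBlock_finRight, ← mul_sum]
      linear_combination hH - β * h * hM
  simp only [sum_fin_two_pow_succ fun i => log (2 * cosh (twoBlock c₁ c₂ i)), twoBlock_finLeft,
    twoBlock_finRight, sum_const, card_univ, Fintype.card_fin, nsmul_eq_mul] at hZ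
  rw [dysonF]
  calc _ = ((2 : ℝ) ^ (k + 1))⁻¹ * (2 ^ k * log (2 * cosh c₁) + 2 ^ k * log (2 * cosh c₂) - C) := by
        rw [Real.log_mul two_ne_zero (cosh_pos c₁).ne', Real.log_mul two_ne_zero (cosh_pos c₂).ne']
        field_simp
        ring
    _ ≤ _ := by push_cast at hZ; gcongr

/-- mean-field bound for the mixture state of the DHM. -/
theorem dyson_mean_field_mixture_bound (β J σ h m1 m2 : ℝ) (hβ : 0 < β) (hJ : 0 < J)
    (hσ : σ ∈ Set.Ioo (1 / 2 : ℝ) 1) (F : ℝ)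
    (hF : Tendsto (fun k => dysonF h β J σ k) atTop (nhds F)) :
    F ≥ Real.log 2 +
        (1 / 2) * Real.log (Real.cosh (β * h + β * J * Cconst (2 * σ - 1) * m1)) +
        (1 / 2) * Real.log (Real.cosh (β * h + β * J * Cconst (2 * σ - 1) * m2)) -
        β * J * Cconst (2 * σ) / 2 -
        β * J * Cconst (2 * σ - 1) / 2 * ((m1 ^ 2 + m2 ^ 2) / 2) := by
  set bound : ℝ × ℝ → ℝ := fun p =>
    log 2 + 1 / 2 * log (cosh (β * h + β * J * p.1 * m1)) +
      1 / 2 * log (cosh (β * h + β * J * p.1 * m2)) - β * J * p.2 / 2 -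
      β * J * p.1 / 2 * ((m1 ^ 2 + m2 ^ 2) / 2)
  have hcont : Continuous bound := by
    fun_prop (disch := exact fun _ => (cosh_pos _).ne')
  have hA := tendsto_geomSum (y := 2 * σ - 1) (by linarith [hσ.1])
  have hD := (tendsto_geomSum (y := 2 * σ) (by linarith [hσ.1])).comp (tendsto_add_atTop_nat 1)
  have hlim : Tendsto (fun k => bound (geomSum (2 * σ - 1) k, geomSum (2 * σ) (k + 1))) atTop
      (nhds (bound (Cconst (2 * σ - 1), Cconst (2 * σ)))) :=
    (hcont.tendsto _).comp (hA.prodMk_nhds hD)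
  exact le_of_tendsto_of_tendsto' hlim (hF.comp (tendsto_add_atTop_nat 1))
    fun k => dysonF_succ_ge h σ hβ.le hJ.le m1 m2 k
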